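/- arXiv:1411.7338 — 3 statements merged into one kernel-verified Lean document; each statement's English description precedes it below -/
import Mathlib

section
/- As n → ∞, sqrt(n)·P(d_n(i,j) = ⌈sqrt(n)⌉) converges to e^(-1/4)/2, where P(d_n(i,j)=m) = ((n-2)!/(2n-4)!)·(2^(m-1)(m-1)(2n-m-4)!/(n-m-1)!). -/
open Filter

/-- The probability that two fixed distinct leaves of a uniformly random
unrooted binary phylogenetic tree on `[n]` are at path distance `m`:
`P(d_n(i,j)=m) = ((n-2)!/(2n-4)!) · 2^(m-1)(m-1)(2n-m-4)!/(n-m-1)!`. -/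
noncomputable def probDist (n m : ℕ) : ℝ :=
  ((Nat.factorial (n - 2) : ℝ) / (Nat.factorial (2 * n - 4))) *
    (2 ^ (m - 1) * ((m : ℝ) - 1) * (Nat.factorial (2 * n - m - 4)) /
      (Nat.factorial (n - m - 1)))

/-!
Cancelling factorials, `P(d_n = m) = (m-1)/(2n-m-3) · ∏_{j<m-1} (a-2j)/(a-j)` with `a = 2n-4`.
By `1 + x ≤ eˣ` the `j`-th factor lies between `exp(-j/(a-2j))` and `exp(-j/a)`, so the product is
squeezed between `exp(-(m-1)(m-2)/(4(n-m)))` and `exp(-(m-1)(m-2)/(4(n-2)))`. When `m ~ √n`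
both exponents tend to `-1/4`, while `√n (m-1)/(2n-m-3) → 1/2`.
-/

open Finset Real Topology

lemma sum_range_natCast_id (k : ℕ) : ∑ j ∈ range k, (j : ℝ) = k * (k - 1) / 2 := by
  induction k with
  | zero => simp
  | succ k ih => rw [sum_range_succ, ih]; push_cast; ring

lemma sub_two_mul_div_sub_le_exp {a j : ℝ} (hj : 0 ≤ j) (hja : 2 * j ≤ a) (ha : 0 < a) :
    (a - 2 * j) / (a - j) ≤ exp (-(j / a)) :=
  calc (a - 2 * j) / (a - j) ≤ (a - j) / a := by
        rw [div_le_div_iff₀ (by linarith) ha]; nlinarith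
    _ = -(j / a) + 1 := by field_simp; ring
    _ ≤ exp (-(j / a)) := add_one_le_exp _

lemma exp_le_sub_two_mul_div_sub {a j c : ℝ} (hj : 0 ≤ j) (hc : 0 < c) (hca : c ≤ a - 2 * j) :
    exp (-(j / c)) ≤ (a - 2 * j) / (a - j) := by
  have hpos : 0 < a - 2 * j := hc.trans_le hca
  calc exp (-(j / c)) ≤ exp (-(j / (a - 2 * j))) :=
        exp_le_exp.2 (neg_le_neg (div_le_div_of_nonneg_left hj hc hca))
    _ ≤ (j / (a - 2 * j) + 1)⁻¹ := by
        rw [exp_neg]; exact inv_anti₀ (by positivity) (add_one_le_exp _)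
    _ = (a - 2 * j) / (a - j) := by rw [div_add_one hpos.ne', inv_div]; ring

lemma prod_sub_two_mul_div_sub_le_exp {a : ℝ} {k : ℕ} (ha : 0 < a)
    (hk : 2 * (k : ℝ) ≤ a + 2) :
    ∏ j ∈ range k, (a - 2 * j) / (a - j) ≤ exp (-(k * (k - 1) / (2 * a))) := by
  have hj : ∀ j ∈ range k, 2 * (j : ℝ) ≤ a := fun j hj => by
    have : (j : ℝ) + 1 ≤ k := by exact_mod_cast mem_range.1 hj
    linarith
  calc ∏ j ∈ range k, (a - 2 * j) / (a - j) ≤ ∏ j ∈ range k, exp (-(j / a)) :=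
        prod_le_prod (fun j hj' => div_nonneg (by linarith [hj j hj']) (by linarith [hj j hj']))
          fun j hj' => sub_two_mul_div_sub_le_exp j.cast_nonneg (hj j hj') ha
    _ = exp (-(k * (k - 1) / (2 * a))) := by
        rw [← exp_sum, sum_neg_distrib, ← sum_div, sum_range_natCast_id, div_div]

lemma exp_le_prod_sub_two_mul_div_sub {a : ℝ} {k : ℕ} (hk : 2 * (k : ℝ) < a + 2) :
    exp (-(k * (k - 1) / (2 * (a + 2 - 2 * k)))) ≤ ∏ j ∈ range k, (a - 2 * j) / (a - j) := by
  have hj : ∀ j ∈ range k, a + 2 - 2 * k ≤ a - 2 * (j : ℝ) := fun j hj => by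
    have : (j : ℝ) + 1 ≤ k := by exact_mod_cast mem_range.1 hj
    linarith
  calc exp (-(k * (k - 1) / (2 * (a + 2 - 2 * k))))
        = ∏ j ∈ range k, exp (-(j / (a + 2 - 2 * k))) := by
        rw [← exp_sum, sum_neg_distrib, ← sum_div, sum_range_natCast_id, div_div]
    _ ≤ ∏ j ∈ range k, (a - 2 * j) / (a - j) :=
        prod_le_prod (fun j _ => (exp_pos _).le)
          fun j hj' => exp_le_sub_two_mul_div_sub j.cast_nonneg (by linarith) (hj j hj')

lemma Nat.cast_descFactorial_eq_prod_range {R : Type*} [CommRing R] (a b : ℕ) :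
    (a.descFactorial b : R) = ∏ j ∈ range b, ((a : R) - j) := by
  rw [← descPochhammer_eval_eq_descFactorial, descPochhammer_eval_eq_prod_range]

lemma probDist_eq_mul_prod {n m : ℕ} (hm : 2 ≤ m) (hmn : m < n) :
    probDist n m = ((m : ℝ) - 1) / (2 * n - m - 3) *
      ∏ j ∈ range (m - 1), ((2 * n - 4 : ℝ) - 2 * j) / ((2 * n - 4 : ℝ) - j) := by
  have hfac₁ : (n - m - 1).factorial * (n - 2).descFactorial (m - 1) = (n - 2).factorial := by
    rw [← Nat.factorial_mul_descFactorial (by omega : m - 1 ≤ n - 2)]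
    congr 2; omega
  have hfac₂ :
      (2 * n - m - 4).factorial * (2 * n - 4).descFactorial m = (2 * n - 4).factorial := by
    rw [← Nat.factorial_mul_descFactorial (by omega : m ≤ 2 * n - 4)]
    congr 2; omega
  have hnum : (2 : ℝ) ^ (m - 1) * ((n - 2).descFactorial (m - 1) : ℝ) =
      ∏ j ∈ range (m - 1), ((2 * n - 4 : ℝ) - 2 * j) := by
    rw [Nat.cast_descFactorial_eq_prod_range, ← card_range (m - 1), ← prod_const,
      card_range, ← prod_mul_distrib, Nat.cast_sub (by omega : 2 ≤ n)]
    push_cast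
    ring_nf
  have hden : ((2 * n - 4).descFactorial m : ℝ) =
      (∏ j ∈ range (m - 1), ((2 * n - 4 : ℝ) - j)) * (2 * n - m - 3) := by
    rw [Nat.cast_descFactorial_eq_prod_range, ← Nat.sub_add_cancel (by omega : 1 ≤ m),
      prod_range_succ, Nat.cast_sub (by omega : 4 ≤ 2 * n)]
    push_cast
    ring
  have hden_ne : ∏ j ∈ range (m - 1), ((2 * n - 4 : ℝ) - j) ≠ 0 :=
    prod_ne_zero_iff.2 fun j hj => by
      have : j + 4 < 2 * n := by have := mem_range.1 hj; omega
      have : (j : ℝ) + 4 < 2 * n := by exact_mod_cast this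
      linarith
  have hlast_ne : (2 * n - m - 3 : ℝ) ≠ 0 := by
    have : (m : ℝ) + 1 ≤ n := by exact_mod_cast hmn
    have : (2 : ℝ) ≤ m := by exact_mod_cast hm
    linarith
  rw [probDist, ← hfac₁, ← hfac₂, prod_div_distrib, ← hnum]
  push_cast
  rw [hden]
  field_simp

noncomputable def probDistBound (n m q : ℝ) : ℝ :=
  (m - 1) / (2 * n - m - 3) * exp (-((m - 1) * (m - 2) / (4 * (n - q))))

lemma probDistBound_le_probDist {n m : ℕ} (hm : 2 ≤ m) (hmn : m < n) :
    probDistBound n m m ≤ probDist n m := by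
  have hm' : (2 : ℝ) ≤ m := by exact_mod_cast hm
  have hmn' : (m : ℝ) + 1 ≤ n := by exact_mod_cast hmn
  have hk : ((m - 1 : ℕ) : ℝ) = m - 1 := by rw [Nat.cast_sub (by omega), Nat.cast_one]
  have hprod := exp_le_prod_sub_two_mul_div_sub (a := 2 * n - 4) (k := m - 1)
    (by rw [hk]; linarith)
  rw [hk] at hprod
  rw [probDist_eq_mul_prod hm hmn, probDistBound]
  refine mul_le_mul_of_nonneg_left (le_of_eq_of_le ?_ hprod)
    (div_nonneg (by linarith) (by linarith))
  congr 3 <;> ring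

lemma probDist_le_probDistBound {n m : ℕ} (hm : 2 ≤ m) (hmn : m < n) :
    probDist n m ≤ probDistBound n m 2 := by
  have hm' : (2 : ℝ) ≤ m := by exact_mod_cast hm
  have hmn' : (m : ℝ) + 1 ≤ n := by exact_mod_cast hmn
  have hk : ((m - 1 : ℕ) : ℝ) = m - 1 := by rw [Nat.cast_sub (by omega), Nat.cast_one]
  have hprod := prod_sub_two_mul_div_sub_le_exp (a := 2 * n - 4) (k := m - 1)
    (by linarith) (by rw [hk]; linarith)
  rw [hk] at hprod
  rw [probDist_eq_mul_prod hm hmn, probDistBound]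
  refine mul_le_mul_of_nonneg_left (hprod.trans_eq ?_) (div_nonneg (by linarith) (by linarith))
  congr 3 <;> ring

lemma mul_probDistBound_sq {s m q : ℝ} (hs : 0 < s) :
    s * probDistBound (s ^ 2) m q =
      (m / s - 1 / s) / (2 - m / s * (1 / s) - 3 * (1 / s) ^ 2) *
        exp (-((m / s - 1 / s) * (m / s - 2 * (1 / s)) / (4 * (1 - q / s ^ 2)))) := by
  rw [probDistBound, ← mul_assoc]
  congr 1
  · field_simp
  · congr 2
    field_simp

lemma tendsto_sqrt_mul_probDistBound {m q : ℕ → ℝ}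
    (hm : Tendsto (fun n ↦ m n / √n) atTop (𝓝 1)) (hq : Tendsto (fun n ↦ q n / n) atTop (𝓝 0)) :
    Tendsto (fun n : ℕ ↦ √n * probDistBound n (m n) (q n)) atTop (𝓝 (exp (-(1 / 4)) / 2)) := by
  have ht : Tendsto (fun n : ℕ ↦ 1 / √n) atTop (𝓝 0) :=
    tendsto_const_nhds.div_atTop (tendsto_sqrt_atTop.comp tendsto_natCast_atTop_atTop)
  -- in the variables `m/√n`, `1/√n`, `q/n` the scaled bound is continuous at `(1, 0, 0)`
  let F : ℝ × ℝ × ℝ → ℝ := fun p ↦ (p.1 - p.2.1) / (2 - p.1 * p.2.1 - 3 * p.2.1 ^ 2) *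
    exp (-((p.1 - p.2.1) * (p.1 - 2 * p.2.1) / (4 * (1 - p.2.2))))
  have hF : ContinuousAt F (1, 0, 0) := by fun_prop (disch := norm_num)
  have hF₁ : F (1, 0, 0) = exp (-(1 / 4)) / 2 := by norm_num [F]; ring
  refine (hF₁ ▸ hF.tendsto.comp (hm.prodMk_nhds (ht.prodMk_nhds hq))).congr' ?_
  filter_upwards [eventually_gt_atTop 0] with n hn
  have := mul_probDistBound_sq (m := m n) (q := q n) (sqrt_pos.2 (Nat.cast_pos.2 hn))
  rw [sq_sqrt n.cast_nonneg] at this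
  exact this.symm

lemma tendsto_sqrt_mul_probDist {m : ℕ → ℕ}
    (hm : Tendsto (fun n ↦ (m n : ℝ) / √n) atTop (𝓝 1)) :
    Tendsto (fun n : ℕ ↦ √n * probDist n (m n)) atTop (𝓝 (exp (-(1 / 4)) / 2)) := by
  have hsqrt : Tendsto (fun n : ℕ ↦ √n) atTop atTop :=
    tendsto_sqrt_atTop.comp tendsto_natCast_atTop_atTop
  have hm_top : Tendsto (fun n ↦ (m n : ℝ)) atTop atTop := by
    refine (hm.pos_mul_atTop one_pos hsqrt).congr' ?_
    filter_upwards [eventually_gt_atTop 0] with n hn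
    exact div_mul_cancel₀ _ (sqrt_pos.2 (Nat.cast_pos.2 hn)).ne'
  have hm_div : Tendsto (fun n ↦ (m n : ℝ) / n) atTop (𝓝 0) := by
    have := hm.mul (tendsto_inv_atTop_zero.comp hsqrt)
    rw [mul_zero] at this
    refine this.congr fun n ↦ ?_
    rw [Function.comp_apply, ← div_eq_mul_inv, div_div, mul_self_sqrt n.cast_nonneg]
  have h_two : Tendsto (fun n : ℕ ↦ (2 : ℝ) / n) atTop (𝓝 0) :=
    tendsto_const_nhds.div_atTop tendsto_natCast_atTop_atTop
  have h_two_le : ∀ᶠ n in atTop, 2 ≤ m n := by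
    filter_upwards [hm_top.eventually_ge_atTop 2] with n hn
    exact_mod_cast hn
  have h_lt : ∀ᶠ n in atTop, m n < n := by
    filter_upwards [hm_div.eventually (gt_mem_nhds one_pos), eventually_gt_atTop 0] with n hn hn₀
    exact_mod_cast (div_lt_one (Nat.cast_pos.2 hn₀)).1 hn
  refine tendsto_of_tendsto_of_tendsto_of_le_of_le' (tendsto_sqrt_mul_probDistBound hm hm_div)
    (tendsto_sqrt_mul_probDistBound hm h_two) ?_ ?_
  · filter_upwards [h_two_le, h_lt] with n h₁ h₂
    exact mul_le_mul_of_nonneg_left (probDistBound_le_probDist h₁ h₂) (sqrt_nonneg _)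
  · filter_upwards [h_two_le, h_lt] with n h₁ h₂
    exact mul_le_mul_of_nonneg_left (probDist_le_probDistBound h₁ h₂) (sqrt_nonneg _)

/-- As `n → ∞`, `√n · P(d_n(i,j) = ⌈√n⌉)` converges to `e^(-1/4)/2`. -/
theorem sqrt_mul_probDist_tendsto :
    Tendsto (fun n : ℕ => Real.sqrt n * probDist n ⌈Real.sqrt n⌉₊) atTop
      (nhds (Real.exp (-(1 / 4 : ℝ)) / 2)) :=
  tendsto_sqrt_mul_probDist
    (tendsto_nat_ceil_div_atTop.comp (tendsto_sqrt_atTop.comp tendsto_natCast_atTop_atTop))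
end

section
/- Let A₁|B₁ and A₂|B₂ be two bipartitions of [n] with |A₁| = i, |A₂| = j, and i ≤ j ≤ n/2. Then either (|A₁ ∩ A₂| ≥ ⌈i/2⌉ and |B₁ ∩ B₂| ≥ j - ⌊i/2⌋) or (|A₁ ∩ B₂| ≥ ⌈i/2⌉ and |B₁ ∩ A₂| ≥ j - ⌊i/2⌋). -/
/-- Split-overlap lemma: if `A₁|B₁` and `A₂|B₂` are bipartitions of `[n]` with
`|A₁| = i`, `|A₂| = j` and `i ≤ j ≤ n/2`, then either
`|A₁ ∩ A₂| ≥ ⌈i/2⌉` and `|B₁ ∩ B₂| ≥ j - ⌊i/2⌋`, or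
`|A₁ ∩ B₂| ≥ ⌈i/2⌉` and `|B₁ ∩ A₂| ≥ j - ⌊i/2⌋`. -/
theorem split_overlap (n i j : ℕ) (A₁ B₁ A₂ B₂ : Finset (Fin n))
    (h₁ : A₁ ∪ B₁ = Finset.univ) (h₁d : Disjoint A₁ B₁)
    (h₂ : A₂ ∪ B₂ = Finset.univ) (h₂d : Disjoint A₂ B₂)
    (hA₁ : A₁.Nonempty) (hB₁ : B₁.Nonempty) (hA₂ : A₂.Nonempty)
    (hB₂ : B₂.Nonempty) (hi : A₁.card = i) (hj : A₂.card = j)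
    (hij : i ≤ j) (hjn : 2 * j ≤ n) :
    ((i + 1) / 2 ≤ (A₁ ∩ A₂).card ∧ j - i / 2 ≤ (B₁ ∩ B₂).card) ∨
    ((i + 1) / 2 ≤ (A₁ ∩ B₂).card ∧ j - i / 2 ≤ (B₁ ∩ A₂).card) := by
  have e1 : (A₁ ∩ A₂).card + (A₁ ∩ B₂).card = i := by
    rw [← Finset.card_union_of_disjoint (h₂d.mono Finset.inter_subset_right
      Finset.inter_subset_right), ← Finset.inter_union_distrib_left, h₂,
      Finset.inter_univ, hi]
  have e2 : (A₁ ∩ A₂).card + (B₁ ∩ A₂).card = j := by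
    rw [← Finset.card_union_of_disjoint (h₁d.mono Finset.inter_subset_left
      Finset.inter_subset_left), ← Finset.union_inter_distrib_right, h₁,
      Finset.univ_inter, hj]
  have e3 : (A₁ ∩ B₂).card + (B₁ ∩ B₂).card = B₂.card := by
    rw [← Finset.card_union_of_disjoint (h₁d.mono Finset.inter_subset_left
      Finset.inter_subset_left), ← Finset.union_inter_distrib_right, h₁,
      Finset.univ_inter]
  have e4 : A₂.card + B₂.card = n := by
    rw [← Finset.card_union_of_disjoint h₂d, h₂, Finset.card_univ, Fintype.card_fin]
  omega
end

section
/- Let P be an exchangeable probability distribution on rooted binary phylogenetic trees with s leaves. Then Σ_{t ∈ RB(s)} P(t)² ≤ 2^(s-1)/s!. -/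
/-- Plane (ordered) rooted binary trees with leaves labelled by `α`. -/
inductive RTree (α : Type) : Type
  | leaf : α → RTree α
  | node : RTree α → RTree α → RTree α

namespace RTree

/-- The multiset of leaf labels of a tree. -/
def labels {α : Type} : RTree α → Multiset α
  | .leaf a => {a}
  | .node l r => labels l + labels r

/-- Relabelling of leaves. -/
def map {α β : Type} (f : α → β) : RTree α → RTree β
  | .leaf a => .leaf (f a)
  | .node l r => .node (map f l) (map f r)

/-- Two plane trees represent the same rooted binary phylogenetic tree
(equality up to swapping the two children at internal vertices). -/
inductive Iso {α : Type} : RTree α → RTree α → Prop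
  | leaf (a : α) : Iso (.leaf a) (.leaf a)
  | node {l₁ r₁ l₂ r₂ : RTree α} : Iso l₁ l₂ → Iso r₁ r₂ →
      Iso (.node l₁ r₁) (.node l₂ r₂)
  | swap {l₁ r₁ l₂ r₂ : RTree α} : Iso l₁ l₂ → Iso r₁ r₂ →
      Iso (.node l₁ r₁) (.node r₂ l₂)

theorem Iso.labels_eq {α : Type} {t₁ t₂ : RTree α} (h : Iso t₁ t₂) :
    t₁.labels = t₂.labels := by
  induction h with
  | leaf a => rfl
  | node _ _ ih₁ ih₂ => simp [labels, ih₁, ih₂]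
  | swap _ _ ih₁ ih₂ => simp [labels, ih₁, ih₂, add_comm]

/-- Restriction of a tree to the leaves in `S`, suppressing degree-two
vertices (`none` if no leaf of the tree lies in `S`). -/
def restrict {α : Type} [DecidableEq α] (S : Finset α) :
    RTree α → Option (RTree α)
  | .leaf a => if a ∈ S then some (.leaf a) else none
  | .node l r =>
    match restrict S l, restrict S r with
    | some l', some r' => some (.node l' r')
    | some l', none => some l'
    | none, o => o

end RTree

/-- Equality of optional trees as phylogenetic trees. -/
def OptIso {α : Type} : Option (RTree α) → Option (RTree α) → Prop
  | some t₁, some t₂ => RTree.Iso t₁ t₂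
  | none, none => True
  | _, _ => False

/-- Rooted binary phylogenetic trees: plane trees up to swapping children. -/
def QTree (α : Type) : Type := Quot (@RTree.Iso α)

/-- Leaf labels of an equivalence class of plane trees. -/
def QTree.labels {α : Type} : QTree α → Multiset α :=
  Quot.lift RTree.labels fun _ _ h => h.labels_eq

/-- The set of rooted binary phylogenetic trees with leaf label set `{1,…,n}`
(each label used exactly once). -/
def RB (n : ℕ) : Type :=
  {T : QTree (Fin n) // T.labels = (Finset.univ : Finset (Fin n)).val}

/-- `T'` is obtained from `T` by permuting the leaf labels by `π`. -/
def IsRelabel (n : ℕ) (π : Equiv.Perm (Fin n)) (T T' : QTree (Fin n)) : Prop :=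
  ∃ t : RTree (Fin n), Quot.mk _ t = T ∧ Quot.mk _ (t.map π) = T'

namespace RTree

-- === auxiliary lemmas ===

theorem Iso.refl {α : Type} (t : RTree α) : Iso t t := by
  induction t with
  | leaf a => exact .leaf a
  | node l r ihl ihr => exact .node ihl ihr

theorem Iso.symm' {α : Type} {t₁ t₂ : RTree α} (h : Iso t₁ t₂) : Iso t₂ t₁ := by
  induction h with
  | leaf a => exact .leaf a
  | node _ _ ih₁ ih₂ => exact .node ih₁ ih₂
  | swap _ _ ih₁ ih₂ => exact .swap ih₂ ih₁

theorem Iso.trans' {α : Type} {t₁ t₂ t₃ : RTree α} (h : Iso t₁ t₂) (h' : Iso t₂ t₃) :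
    Iso t₁ t₃ := by
  induction h generalizing t₃ with
  | leaf a => exact h'
  | node h1 h2 ih₁ ih₂ =>
    cases h' with
    | node g1 g2 => exact .node (ih₁ g1) (ih₂ g2)
    | swap g1 g2 => exact .swap (ih₁ g1) (ih₂ g2)
  | swap h1 h2 ih₁ ih₂ =>
    cases h' with
    | node g1 g2 => exact .swap (ih₁ g2) (ih₂ g1)
    | swap g1 g2 => exact .node (ih₁ g2) (ih₂ g1)

theorem Iso.equivalence (α : Type) : Equivalence (@Iso α) :=
  ⟨Iso.refl, Iso.symm', Iso.trans'⟩

theorem Iso.map {α β : Type} (f : α → β) {t₁ t₂ : RTree α} (h : Iso t₁ t₂) :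
    Iso (t₁.map f) (t₂.map f) := by
  induction h with
  | leaf a => exact .leaf (f a)
  | node _ _ ih₁ ih₂ => exact .node ih₁ ih₂
  | swap _ _ ih₁ ih₂ => exact .swap ih₁ ih₂

theorem labels_map {α β : Type} (f : α → β) (t : RTree α) :
    (t.map f).labels = t.labels.map f := by
  induction t with
  | leaf a => rfl
  | node l r ihl ihr => simp [RTree.map, labels, ihl, ihr]

theorem one_le_card_labels {α : Type} (t : RTree α) : 1 ≤ Multiset.card t.labels := by
  induction t with
  | leaf a => simp [labels]
  | node l r ihl ihr => simp [labels]; omega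

theorem map_eq_map {α β : Type} {f g : α → β} {t : RTree α}
    (h : t.map f = t.map g) : ∀ a ∈ t.labels, f a = g a := by
  induction t with
  | leaf a =>
    intro b hb
    rw [labels, Multiset.mem_singleton] at hb
    subst hb
    simpa [RTree.map] using h
  | node l r ihl ihr =>
    intro b hb
    rw [RTree.map, RTree.map, node.injEq] at h
    rw [labels, Multiset.mem_add] at hb
    rcases hb with hb | hb
    · exact ihl h.1 b hb
    · exact ihr h.2 b hb

deriving instance DecidableEq for RTree

variable {α : Type} [DecidableEq α]

/-- A finite set containing every tree isomorphic to `t`. -/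
def isoSet : RTree α → Finset (RTree α)
  | .leaf a => {.leaf a}
  | .node l r =>
      ((isoSet l) ×ˢ (isoSet r)).image (fun p => RTree.node p.1 p.2) ∪
      ((isoSet r) ×ˢ (isoSet l)).image (fun p => RTree.node p.1 p.2)

theorem mem_isoSet_of_iso {t u : RTree α} (h : Iso u t) : u ∈ isoSet t := by
  induction h with
  | leaf a => simp [isoSet]
  | node _ _ ih₁ ih₂ =>
    rw [isoSet]
    exact Finset.mem_union_left _ (Finset.mem_image.2 ⟨(_, _), Finset.mk_mem_product ih₁ ih₂, rfl⟩)
  | swap _ _ ih₁ ih₂ =>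
    rw [isoSet]
    exact Finset.mem_union_right _ (Finset.mem_image.2 ⟨(_, _), Finset.mk_mem_product ih₁ ih₂, rfl⟩)

theorem card_isoSet_le (t : RTree α) :
    (isoSet t).card ≤ 2 ^ (Multiset.card t.labels - 1) := by
  induction t with
  | leaf a => simp [isoSet, labels]
  | node l r ihl ihr =>
    have hl := one_le_card_labels l
    have hr := one_le_card_labels r
    rw [isoSet]
    calc (((isoSet l) ×ˢ (isoSet r)).image (fun p => RTree.node p.1 p.2) ∪
      ((isoSet r) ×ˢ (isoSet l)).image (fun p => RTree.node p.1 p.2)).card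
        ≤ (((isoSet l) ×ˢ (isoSet r)).image (fun p => RTree.node p.1 p.2)).card
          + (((isoSet r) ×ˢ (isoSet l)).image (fun p => RTree.node p.1 p.2)).card :=
        Finset.card_union_le _ _
      _ ≤ ((isoSet l) ×ˢ (isoSet r)).card + ((isoSet r) ×ˢ (isoSet l)).card :=
        Nat.add_le_add (Finset.card_image_le) (Finset.card_image_le)
      _ = (isoSet l).card * (isoSet r).card + (isoSet r).card * (isoSet l).card := by
        rw [Finset.card_product, Finset.card_product]
      _ ≤ 2 ^ (Multiset.card l.labels - 1) * 2 ^ (Multiset.card r.labels - 1)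
          + 2 ^ (Multiset.card r.labels - 1) * 2 ^ (Multiset.card l.labels - 1) :=
        Nat.add_le_add (Nat.mul_le_mul ihl ihr) (Nat.mul_le_mul ihr ihl)
      _ ≤ 2 ^ (Multiset.card (labels (RTree.node l r)) - 1) := by
        rw [labels, Multiset.card_add]
        apply le_of_eq
        have hx : Multiset.card l.labels + Multiset.card r.labels - 1
            = (Multiset.card l.labels - 1) + (Multiset.card r.labels - 1) + 1 := by omega
        rw [hx, pow_succ, pow_add]
        ring


end RTree


open Function in
theorem pointwise_bound (s : ℕ) (P : RB s → ℝ)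
    (hP0 : ∀ t, 0 ≤ P t) (hP1 : ∑ᶠ t : RB s, P t = 1)
    (hexch : ∀ (π : Equiv.Perm (Fin s)) (T T' : RB s),
      IsRelabel s π T.1 T'.1 → P T = P T') (T : RB s) :
    P T ≤ 2 ^ (s - 1) / Nat.factorial s := by
  classical
  have hfin : (Function.support P).Finite := by
    by_contra h
    rw [finsum_of_infinite_support h] at hP1
    norm_num at hP1
  obtain ⟨t, ht⟩ := Quot.exists_rep T.1
  have hlab : t.labels = (Finset.univ : Finset (Fin s)).val := by
    have h2 := T.2
    rw [← ht] at h2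
    exact h2
  have hmapuniv : ∀ π : Equiv.Perm (Fin s),
      Multiset.map ⇑π (Finset.univ : Finset (Fin s)).val = Finset.univ.val := by
    intro π
    calc Multiset.map ⇑π Finset.univ.val = (Finset.univ.map π.toEmbedding).val := by
          rw [Finset.map_val]; rfl
      _ = Finset.univ.val := by rw [Finset.map_univ_equiv]
  have hFlab : ∀ π : Equiv.Perm (Fin s),
      (QTree.labels (Quot.mk _ (t.map ⇑π)) : Multiset (Fin s)) = Finset.univ.val := by
    intro π
    show (t.map ⇑π).labels = _
    rw [RTree.labels_map, hlab, hmapuniv]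
  set F : Equiv.Perm (Fin s) → RB s := fun π => ⟨Quot.mk _ (t.map ⇑π), hFlab π⟩ with hF
  have hPF : ∀ π, P (F π) = P T := fun π => (hexch π T (F π) ⟨t, ht, rfl⟩).symm
  have hiso : ∀ π σ : Equiv.Perm (Fin s), F π = F σ → RTree.Iso (t.map ⇑π) (t.map ⇑σ) := by
    intro π σ h
    have h1 : (Quot.mk _ (t.map ⇑π) : QTree (Fin s)) = Quot.mk _ (t.map ⇑σ) :=
      congrArg Subtype.val h
    exact ((RTree.Iso.equivalence (Fin s)).eqvGen_iff).mp (Quot.eq.mp h1)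
  have hfiber : ∀ b ∈ Finset.univ.image F,
      (Finset.univ.filter (fun π => F π = b)).card ≤ 2 ^ (s - 1) := by
    intro b hb
    obtain ⟨σ, _, hσ⟩ := Finset.mem_image.1 hb
    have hinj : Set.InjOn (fun π : Equiv.Perm (Fin s) => t.map ⇑π)
        ↑(Finset.univ.filter (fun π => F π = b)) := by
      intro π _ ρ _ h
      apply Equiv.ext
      intro a
      exact RTree.map_eq_map h a (by rw [hlab]; simp)
    have hsub : ∀ π ∈ Finset.univ.filter (fun π => F π = b),
        t.map ⇑π ∈ RTree.isoSet (t.map ⇑σ) := by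
      intro π hπ
      rw [Finset.mem_filter] at hπ
      exact RTree.mem_isoSet_of_iso (hiso π σ (hπ.2.trans hσ.symm))
    calc (Finset.univ.filter (fun π => F π = b)).card
        ≤ (RTree.isoSet (t.map ⇑σ)).card := Finset.card_le_card_of_injOn _ hsub hinj
      _ ≤ 2 ^ (Multiset.card (t.map ⇑σ).labels - 1) := RTree.card_isoSet_le _
      _ = 2 ^ (s - 1) := by
          rw [RTree.labels_map, Multiset.card_map, hlab]
          congr 1
          simp
  have hcard : s.factorial ≤ (Finset.univ.image F).card * 2 ^ (s - 1) := by
    have h1 : (Finset.univ : Finset (Equiv.Perm (Fin s))).card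
        = ∑ b ∈ Finset.univ.image F, (Finset.univ.filter (fun π => F π = b)).card :=
      Finset.card_eq_sum_card_fiberwise (fun π _ => Finset.mem_image_of_mem F (Finset.mem_univ π))
    rw [Finset.card_univ, Fintype.card_perm, Fintype.card_fin] at h1
    calc s.factorial
        = ∑ b ∈ Finset.univ.image F, (Finset.univ.filter (fun π => F π = b)).card := h1
      _ ≤ ∑ _b ∈ Finset.univ.image F, 2 ^ (s - 1) := Finset.sum_le_sum hfiber
      _ = (Finset.univ.image F).card * 2 ^ (s - 1) := by
          rw [Finset.sum_const, smul_eq_mul]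
  have hsum : ((Finset.univ.image F).card : ℝ) * P T ≤ 1 := by
    have heq : ∑ b ∈ Finset.univ.image F, P b = ((Finset.univ.image F).card : ℝ) * P T := by
      rw [Finset.sum_congr rfl (fun b hb => ?_), Finset.sum_const, nsmul_eq_mul]
      obtain ⟨σ, _, hσ⟩ := Finset.mem_image.1 hb
      rw [← hσ]
      exact hPF σ
    rw [← heq, ← hP1,
      finsum_eq_finset_sum_of_support_subset P
        (s := hfin.toFinset ∪ Finset.univ.image F)
        (fun x hx => Finset.mem_coe.2 (Finset.mem_union_left _ (hfin.mem_toFinset.2 hx)))]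
    exact Finset.sum_le_sum_of_subset_of_nonneg Finset.subset_union_right
      (fun i _ _ => hP0 i)
  have hfac : (0 : ℝ) < (s.factorial : ℝ) := by
    exact_mod_cast s.factorial_pos
  rw [le_div_iff₀ hfac]
  have hcard' : (s.factorial : ℝ) ≤ ((Finset.univ.image F).card : ℝ) * 2 ^ (s - 1) := by
    exact_mod_cast hcard
  calc P T * (s.factorial : ℝ)
      ≤ P T * (((Finset.univ.image F).card : ℝ) * 2 ^ (s - 1)) :=
        mul_le_mul_of_nonneg_left hcard' (hP0 T)
    _ = (((Finset.univ.image F).card : ℝ) * P T) * 2 ^ (s - 1) := by ring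
    _ ≤ 1 * 2 ^ (s - 1) := mul_le_mul_of_nonneg_right hsum (by positivity)
    _ = 2 ^ (s - 1) := one_mul _

open scoped BigOperators

/-- If `P` is an exchangeable probability distribution on the rooted binary
phylogenetic trees with `s` leaves, then `Σ_t P(t)² ≤ 2^(s-1)/s!`. -/
theorem exchangeable_sum_sq_le (s : ℕ) (hs : 1 ≤ s) (P : RB s → ℝ)
    (hP0 : ∀ t, 0 ≤ P t) (hP1 : ∑ᶠ t : RB s, P t = 1)
    (hexch : ∀ (π : Equiv.Perm (Fin s)) (T T' : RB s),
      IsRelabel s π T.1 T'.1 → P T = P T') :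
    ∑ᶠ t : RB s, (P t) ^ 2 ≤ 2 ^ (s - 1) / Nat.factorial s := by
  classical
  have hfin : (Function.support P).Finite := by
    by_contra h
    rw [finsum_of_infinite_support h] at hP1
    norm_num at hP1
  have key : ∀ T, P T ≤ 2 ^ (s - 1) / Nat.factorial s :=
    pointwise_bound s P hP0 hP1 hexch
  have hsq : Function.support (fun t : RB s => P t ^ 2) ⊆ ↑hfin.toFinset := by
    intro x hx
    rw [Set.Finite.coe_toFinset]
    intro h0
    apply hx
    simp [h0]
  rw [finsum_eq_finset_sum_of_support_subset _ hsq]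
  have h1 : ∑ x ∈ hfin.toFinset, P x = 1 := by rw [← finsum_eq_sum P hfin, hP1]
  have hnn : (0:ℝ) ≤ 2 ^ (s - 1) / Nat.factorial s := by positivity
  calc ∑ x ∈ hfin.toFinset, P x ^ 2
      ≤ ∑ x ∈ hfin.toFinset, (2 ^ (s - 1) / Nat.factorial s) * P x := by
        apply Finset.sum_le_sum
        intro i _
        rw [pow_two]
        exact mul_le_mul_of_nonneg_right (key i) (hP0 i)
    _ = (2 ^ (s - 1) / Nat.factorial s) * ∑ x ∈ hfin.toFinset, P x := by
        rw [Finset.mul_sum]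
    _ = 2 ^ (s - 1) / Nat.factorial s := by rw [h1, mul_one]
end
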